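/- arXiv:1110.1334 — 4 statements merged into one kernel-verified Lean document; each statement's English description precedes it below -/
import Mathlib

section
/- Let (X, d) be a proper geodesic metric space equipped with a doubling measure μ, and assume that for μ-almost every x ∈ X any two tangents of X at x are pointed isometric. Then for μ-almost every x ∈ X, every proper tangent (Y, y) of X at x satisfies: every proper tangent of Y at y is pointed isometric to (Y, y) itself. -/
open Metric Filter MeasureTheory

universe u v w

/-- `BallsGHClose l x y R ε` asserts that the Gromov–Hausdorff distance between the closed
ball of radius `R` centered at `x` in the rescaled space `(X, l·d)` (which, as a set, is the
closed ball of radius `R / l` around `x` in `X`, carrying the distance `l · d`) and the closed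
ball of radius `R` centered at `y` in `Y` is less than `ε`: following the definition of the
Gromov–Hausdorff distance, there are isometric copies of the two balls inside a common metric
space `Z` whose Hausdorff distance in `Z` is `< ε`. -/
def BallsGHClose {X : Type u} {Y : Type v} [MetricSpace X] [MetricSpace Y]
    (l : ℝ) (x : X) (y : Y) (R ε : ℝ) : Prop :=
  ∃ (Z : Type (max u v)) (_ : MetricSpace Z) (f : X → Z) (g : Y → Z),
    (∀ a ∈ closedBall x (R / l), ∀ b ∈ closedBall x (R / l),
      dist (f a) (f b) = l * dist a b) ∧
    (∀ a ∈ closedBall y R, ∀ b ∈ closedBall y R, dist (g a) (g b) = dist a b) ∧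
    hausdorffDist (f '' closedBall x (R / l)) (g '' closedBall y R) < ε

/-- `(Y, y)` is a tangent (blow-up) of `X` at `x`: there is a sequence `λ_j → ∞` of positive
reals such that, for every `R > 0`, the Gromov–Hausdorff distance between the closed ball of
radius `R` centered at `x` in `(X, λ_j · d)` and the closed ball of radius `R` centered at `y`
in `Y` tends to `0` as `j → ∞`. -/
def IsTangentAt {X : Type u} [MetricSpace X] (x : X)
    (Y : Type v) [MetricSpace Y] (y : Y) : Prop :=
  ∃ lam : ℕ → ℝ, (∀ j, 0 < lam j) ∧ Tendsto lam atTop atTop ∧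
    ∀ R > (0 : ℝ), ∀ ε > (0 : ℝ), ∀ᶠ j in atTop, BallsGHClose (lam j) x y R ε

/-- Two pointed metric spaces `(Y, y)` and `(Y', y')` are pointed isometric if there is a
surjective isometry `f : Y → Y'` with `f y = y'`. -/
def PointedIsometric {Y : Type v} {Y' : Type w} [MetricSpace Y] [MetricSpace Y']
    (y : Y) (y' : Y') : Prop :=
  ∃ f : Y → Y', Isometry f ∧ Function.Surjective f ∧ f y = y'

/-- A doubling measure: a nonzero Radon measure (on a proper metric space, Radon means Borel
and finite on compact sets) such that `μ(B(x, 2r)) ≤ C · μ(B(x, r))` for some constant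
`C > 0`, every center `x` and every radius `r > 0`. -/
def IsDoublingMeasure {X : Type u} [MetricSpace X] [MeasurableSpace X]
    (μ : Measure X) : Prop :=
  μ ≠ 0 ∧ (∀ K : Set X, IsCompact K → μ K ≠ ⊤) ∧
    ∃ C : NNReal, 0 < C ∧ ∀ (x : X) (r : ℝ), 0 < r →
      μ (closedBall x (2 * r)) ≤ (C : ENNReal) * μ (closedBall x r)

/-- A metric space is geodesic if any two points `x, y` are joined by an isometric embedding
of the real interval `[0, dist x y]`. -/
def IsGeodesicSpace (X : Type u) [MetricSpace X] : Prop :=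
  ∀ x y : X, ∃ γ : ℝ → X, γ 0 = x ∧ γ (dist x y) = y ∧
    ∀ s ∈ Set.Icc 0 (dist x y), ∀ t ∈ Set.Icc 0 (dist x y), dist (γ s) (γ t) = |s - t|


/-!
At a point `x` where tangents are unique, every tangent `(Y, y)` is self-similar: rescaling the
blow-up sequence shows that `(Y, m • d)` is again a tangent of `X` at `x`, hence pointed isometric
to `(Y, d)`, which yields a surjective similarity of `Y` of any ratio fixing `y`. Precomposing the
blow-up of `Y` at `y` with these similarities shows that the balls of a tangent `(Z, z)` of `Y` at
`y` are Gromov–Hausdorff close to the balls of `Y` of the same radius. Gluing these witnesses to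
those of `Y` being a tangent of `X` makes `Z` a tangent of `X` at `x`, so `Z` is pointed isometric
to `Y`.
-/

open Set Function TopologicalSpace Bornology
open scoped ENNReal lp

section DistEqMul

variable {α β : Type*} [PseudoMetricSpace α] [PseudoMetricSpace β]

theorem image_closedBall_of_dist_eq_mul {f : α → β} (hf : Surjective f) {c : ℝ} (hc : 0 < c)
    (hdist : ∀ p q, dist (f p) (f q) = c * dist p q) (p : α) (r : ℝ) :
    f '' closedBall p r = closedBall (f p) (c * r) := by
  ext q
  obtain ⟨q, rfl⟩ := hf q
  refine ⟨?_, fun hq => ⟨q, ?_, rfl⟩⟩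
  · rintro ⟨a, ha, hfa⟩
    rw [mem_closedBall, ← hfa, hdist]
    exact mul_le_mul_of_nonneg_left ha hc.le
  · rwa [mem_closedBall, hdist, mul_le_mul_iff_right₀ hc] at hq

theorem ProperSpace.of_surjective_dist_eq_mul [ProperSpace α] {f : α → β} (hf : Surjective f)
    {c : ℝ} (hc : 0 < c) (hdist : ∀ p q, dist (f p) (f q) = c * dist p q) : ProperSpace β := by
  have hcont : Continuous f :=
    (LipschitzWith.of_dist_le_mul (K := c.toNNReal) fun p q => by
      rw [hdist, Real.coe_toNNReal _ hc.le]).continuous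
  refine ⟨fun q r => ?_⟩
  obtain ⟨p, rfl⟩ := hf q
  rw [← mul_div_cancel₀ r hc.ne', ← image_closedBall_of_dist_eq_mul hf hc hdist]
  exact (isCompact_closedBall p _).image hcont

theorem IsCompact.image_of_dist_eq_mul {s : Set α} (hs : IsCompact s) {f : α → β} {l : ℝ}
    (hf : ∀ a ∈ s, ∀ b ∈ s, dist (f a) (f b) = l * dist a b) : IsCompact (f '' s) :=
  hs.image_of_continuousOn (LipschitzOnWith.of_dist_le' (K := l) fun a ha b hb =>
    (hf a ha b hb).le).continuousOn

theorem Bornology.IsBounded.image_of_dist_eq_mul {s : Set α} (hs : IsBounded s) {f : α → β}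
    {l : ℝ} (hf : ∀ a ∈ s, ∀ b ∈ s, dist (f a) (f b) = l * dist a b) : IsBounded (f '' s) := by
  obtain ⟨C, hC⟩ := Metric.isBounded_iff.1 hs
  refine Metric.isBounded_iff.2 ⟨|l| * C, ?_⟩
  rintro _ ⟨a, ha, rfl⟩ _ ⟨b, hb, rfl⟩
  rw [hf a ha b hb]
  calc l * dist a b ≤ |l| * dist a b := by gcongr; exact le_abs_self l
    _ ≤ |l| * C := by gcongr; exact hC ha hb

theorem hausdorffDist_image_of_dist_eq_mul {f : α → β} {c : ℝ} (hc : 0 < c)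
    (hdist : ∀ p q, dist (f p) (f q) = c * dist p q) (s t : Set α) :
    hausdorffDist (f '' s) (f '' t) = c * hausdorffDist s t := by
  have hedist : ∀ p q, edist (f p) (f q) = ENNReal.ofReal c * edist p q := fun p q => by
    rw [edist_dist, edist_dist, hdist, ENNReal.ofReal_mul hc.le]
  have hc0 : ENNReal.ofReal c ≠ 0 := ENNReal.ofReal_ne_zero_iff.2 hc
  have hinf : ∀ p (u : Set α), infEDist (f p) (f '' u) = ENNReal.ofReal c * infEDist p u := by
    intro p u
    simp only [infEDist, iInf_image, hedist, ENNReal.mul_iInf_of_ne hc0 ENNReal.ofReal_ne_top]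
  simp only [hausdorffDist, hausdorffEDist_def, iSup_image, hinf, ← ENNReal.mul_iSup, ← mul_max,
    ENNReal.toReal_mul, ENNReal.toReal_ofReal hc.le]

theorem hausdorffDist_image_of_dist_eq_on {f : α → β} {s t : Set α}
    (hf : ∀ a ∈ s ∪ t, ∀ b ∈ s ∪ t, dist (f a) (f b) = dist a b) :
    hausdorffDist (f '' s) (f '' t) = hausdorffDist s t := by
  set u := s ∪ t
  have hi : Isometry fun a : u => f a := Isometry.of_dist_eq fun a b => hf a a.2 b b.2
  have hs : s = (↑) '' ((↑) ⁻¹' s : Set u) := by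
    rw [Subtype.image_preimage_coe, inter_eq_right.2 subset_union_left]
  have ht : t = (↑) '' ((↑) ⁻¹' t : Set u) := by
    rw [Subtype.image_preimage_coe, inter_eq_right.2 subset_union_right]
  rw [hs, ht, image_image, image_image, hausdorffDist_image hi,
    hausdorffDist_image isometry_subtype_coe]

end DistEqMul

theorem exists_lp_dist_eq_of_isSeparable {Z : Type*} [MetricSpace Z] {s : Set Z}
    (hs : IsSeparable s) : ∃ F : Z → ℓ^∞(ℕ, ℝ), ∀ a ∈ s, ∀ b ∈ s, dist (F a) (F b) = dist a b := by
  rcases s.eq_empty_or_nonempty with rfl | ⟨a₀, ha₀⟩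
  · exact ⟨0, by simp⟩
  have := hs.separableSpace
  have : Nonempty s := ⟨⟨a₀, ha₀⟩⟩
  obtain ⟨x, hx⟩ := exists_dense_seq s
  have hrestrict : ∀ a (ha : a ∈ s), KuratowskiEmbedding.embeddingOfSubset ((↑) ∘ x) a =
      KuratowskiEmbedding.embeddingOfSubset x ⟨a, ha⟩ := fun a ha =>
    lp.ext <| funext fun n => by simp [KuratowskiEmbedding.embeddingOfSubset_coe, Subtype.dist_eq]
  refine ⟨KuratowskiEmbedding.embeddingOfSubset ((↑) ∘ x), fun a ha b hb => ?_⟩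
  rw [hrestrict a ha, hrestrict b hb,
    (KuratowskiEmbedding.embeddingOfSubset_isometry x hx).dist_eq, Subtype.dist_eq]

def BallsGHCloseIn {X : Type*} {Y : Type*} (W : Type*) [MetricSpace X] [MetricSpace Y]
    [MetricSpace W] (l : ℝ) (x : X) (y : Y) (R ε : ℝ) : Prop :=
  ∃ (f : X → W) (g : Y → W),
    (∀ a ∈ closedBall x (R / l), ∀ b ∈ closedBall x (R / l),
      dist (f a) (f b) = l * dist a b) ∧
    (∀ a ∈ closedBall y R, ∀ b ∈ closedBall y R, dist (g a) (g b) = dist a b) ∧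
    hausdorffDist (f '' closedBall x (R / l)) (g '' closedBall y R) < ε

theorem ballsGHClose_iff_exists {X : Type u} {Y : Type v} [MetricSpace X] [MetricSpace Y]
    {l : ℝ} {x : X} {y : Y} {R ε : ℝ} :
    BallsGHClose l x y R ε ↔ ∃ (W : Type (max u v)) (_ : MetricSpace W),
      BallsGHCloseIn W l x y R ε :=
  Iff.rfl

namespace BallsGHCloseIn

universe a b

variable {X Y W : Type*} [MetricSpace X] [MetricSpace Y] [MetricSpace W]
  {l R ε : ℝ} {x : X} {y : Y}

theorem map {W' : Type*} [MetricSpace W'] (h : BallsGHCloseIn W l x y R ε) {F : W → W'}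
    (hF : Isometry F) : BallsGHCloseIn W' l x y R ε := by
  obtain ⟨f, g, hf, hg, hH⟩ := h
  refine ⟨F ∘ f, F ∘ g, fun a ha b hb => ?_, fun a ha b hb => ?_, ?_⟩
  · rw [comp_apply, comp_apply, hF.dist_eq, hf a ha b hb]
  · rw [comp_apply, comp_apply, hF.dist_eq, hg a ha b hb]
  · rwa [image_comp, image_comp, hausdorffDist_image hF]

/-- Moving witnesses into `ℓ^∞(ℕ, ℝ)` frees `BallsGHClose` from the universe of its witness
space, and makes witnesses rescalable by scalar multiplication. -/
theorem toLp [ProperSpace X] [ProperSpace Y] (h : BallsGHCloseIn W l x y R ε) :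
    BallsGHCloseIn ℓ^∞(ℕ, ℝ) l x y R ε := by
  obtain ⟨f, g, hf, hg, hH⟩ := h
  have hg' : ∀ a ∈ closedBall y R, ∀ b ∈ closedBall y R, dist (g a) (g b) = 1 * dist a b := by
    simpa only [one_mul] using hg
  obtain ⟨F, hF⟩ := exists_lp_dist_eq_of_isSeparable
    (((isCompact_closedBall x (R / l)).image_of_dist_eq_mul hf).union
      ((isCompact_closedBall y R).image_of_dist_eq_mul hg')).isSeparable
  refine ⟨F ∘ f, F ∘ g, fun a ha b hb => ?_, fun a ha b hb => ?_, ?_⟩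
  · rw [comp_apply, comp_apply, hF _ (.inl ⟨a, ha, rfl⟩) _ (.inl ⟨b, hb, rfl⟩), hf a ha b hb]
  · rw [comp_apply, comp_apply, hF _ (.inr ⟨a, ha, rfl⟩) _ (.inr ⟨b, hb, rfl⟩), hg a ha b hb]
  · rwa [image_comp, image_comp, hausdorffDist_image_of_dist_eq_on hF]

theorem comp_left {X' : Type*} [MetricSpace X'] (h : BallsGHCloseIn W l x y R ε) (hl : 0 < l)
    {G : X' → X} (hG : Surjective G) {c : ℝ} (hc : 0 < c)
    (hdist : ∀ p q, dist (G p) (G q) = c * dist p q) {x' : X'} (hx : G x' = x) :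
    BallsGHCloseIn W (l * c) x' y R ε := by
  obtain ⟨f, g, hf, hg, hH⟩ := h
  have hball : G '' closedBall x' (R / (l * c)) = closedBall x (R / l) := by
    rw [image_closedBall_of_dist_eq_mul hG hc hdist, hx]
    congr 1
    field_simp
  have hmaps : ∀ a ∈ closedBall x' (R / (l * c)), G a ∈ closedBall x (R / l) :=
    fun a ha => hball ▸ mem_image_of_mem G ha
  refine ⟨f ∘ G, g, fun a ha b hb => ?_, hg, ?_⟩
  · rw [comp_apply, comp_apply, hf _ (hmaps a ha) _ (hmaps b hb), hdist, mul_assoc]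
  · rwa [image_comp, hball]

theorem rescale {E Y' : Type*} [NormedAddCommGroup E] [NormedSpace ℝ E] [MetricSpace Y']
    (h : BallsGHCloseIn E l x y R ε) {ψ : Y' → Y} (hψ : Surjective ψ) {c : ℝ} (hc : 0 < c)
    (hdist : ∀ p q, dist (ψ p) (ψ q) = c * dist p q) {y' : Y'} (hy : ψ y' = y) :
    BallsGHCloseIn E (l / c) x y' (R / c) (ε / c) := by
  obtain ⟨f, g, hf, hg, hH⟩ := h
  have hball : ψ '' closedBall y' (R / c) = closedBall y R := by
    rw [image_closedBall_of_dist_eq_mul hψ hc hdist, hy, mul_div_cancel₀ R hc.ne']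
  have hmaps : ∀ a ∈ closedBall y' (R / c), ψ a ∈ closedBall y R :=
    fun a ha => hball ▸ mem_image_of_mem ψ ha
  have hsmul : ∀ u v : E, dist (c⁻¹ • u) (c⁻¹ • v) = c⁻¹ * dist u v := fun u v => by
    rw [dist_smul₀, Real.norm_of_nonneg (inv_nonneg.2 hc.le)]
  rw [BallsGHCloseIn, div_div_div_cancel_right₀ hc.ne']
  refine ⟨(c⁻¹ • ·) ∘ f, (c⁻¹ • ·) ∘ g ∘ ψ, fun a ha b hb => ?_, fun a ha b hb => ?_, ?_⟩
  · rw [comp_apply, comp_apply, hsmul, hf a ha b hb, div_eq_inv_mul, mul_assoc]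
  · simp only [comp_apply]
    rw [hsmul, hg _ (hmaps a ha) _ (hmaps b hb), hdist, inv_mul_cancel_left₀ hc.ne']
  · rw [image_comp, image_comp, image_comp, hball,
      hausdorffDist_image_of_dist_eq_mul (inv_pos.2 hc) hsmul, div_eq_inv_mul ε]
    exact mul_lt_mul_of_pos_left hH (inv_pos.2 hc)

theorem trans {Z : Type*} [MetricSpace Z] {z : Z} {ε' : ℝ} {V₁ : Type a} {V₂ : Type b}
    [MetricSpace V₁] [MetricSpace V₂] (h : BallsGHCloseIn V₁ l x y R ε)
    (h' : BallsGHCloseIn V₂ 1 y z R ε') (hl : 0 ≤ l) (hR : 0 ≤ R) :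
    ∃ (V : Type (max a b)) (_ : MetricSpace V), BallsGHCloseIn V l x z R (ε + ε') := by
  obtain ⟨f, g, hf, hg, hH⟩ := h
  obtain ⟨f', g', hf', hg', hH'⟩ := h'
  simp only [div_one, one_mul] at hf' hH'
  have : Nonempty (closedBall y R) := ⟨⟨y, mem_closedBall_self hR⟩⟩
  have hΦ : Isometry fun p : closedBall y R => g p :=
    Isometry.of_dist_eq fun p q => hg p p.2 q q.2
  have hΨ : Isometry fun p : closedBall y R => f' p :=
    Isometry.of_dist_eq fun p q => hf' p p.2 q q.2
  set L := Metric.toGlueL hΦ hΨ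
  set R' := Metric.toGlueR hΦ hΨ
  have hL := Metric.toGlueL_isometry hΦ hΨ
  have hR' := Metric.toGlueR_isometry hΦ hΨ
  have hmid : L '' (g '' closedBall y R) = R' '' (f' '' closedBall y R) := by
    have := congrArg range (Metric.toGlue_commute hΦ hΨ)
    rwa [range_comp, range_comp, ← image_eq_range, ← image_eq_range] at this
  refine ⟨_, inferInstance, L ∘ f, R' ∘ g', fun a ha b hb => ?_, fun a ha b hb => ?_, ?_⟩
  · rw [comp_apply, comp_apply, hL.dist_eq, hf a ha b hb]
  · rw [comp_apply, comp_apply, hR'.dist_eq, hg' a ha b hb]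
  have hxR : x ∈ closedBall x (R / l) := mem_closedBall_self (div_nonneg hR hl)
  have hyR : y ∈ closedBall y R := mem_closedBall_self hR
  have hfin : hausdorffEDist (f '' closedBall x (R / l)) (g '' closedBall y R) ≠ ⊤ :=
    hausdorffEDist_ne_top_of_nonempty_of_bounded ⟨_, mem_image_of_mem f hxR⟩
      ⟨_, mem_image_of_mem g hyR⟩ (isBounded_closedBall.image_of_dist_eq_mul hf)
      (isBounded_closedBall.image_of_dist_eq_mul (l := 1) (by simpa only [one_mul] using hg))
  calc hausdorffDist ((L ∘ f) '' closedBall x (R / l)) ((R' ∘ g') '' closedBall z R)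
      ≤ hausdorffDist (L '' (f '' closedBall x (R / l))) (L '' (g '' closedBall y R)) +
        hausdorffDist (R' '' (f' '' closedBall y R)) (R' '' (g' '' closedBall z R)) := by
        rw [image_comp, image_comp, ← hmid]
        exact hausdorffDist_triangle (by rwa [hausdorffEDist_image hL])
    _ < ε + ε' := by
        rw [hausdorffDist_image hL, hausdorffDist_image hR']
        exact add_lt_add hH hH'

end BallsGHCloseIn

theorem BallsGHClose.of_lp {X : Type u} {Y : Type v} [MetricSpace X] [MetricSpace Y]
    {l : ℝ} {x : X} {y : Y} {R ε : ℝ} (h : BallsGHCloseIn ℓ^∞(ℕ, ℝ) l x y R ε) :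
    BallsGHClose l x y R ε :=
  ⟨ULift ℓ^∞(ℕ, ℝ), inferInstance, h.map (Isometry.of_dist_eq fun _ _ => rfl)⟩

theorem BallsGHClose.toLp {X : Type u} {Y : Type v} [MetricSpace X] [MetricSpace Y]
    [ProperSpace X] [ProperSpace Y] {l : ℝ} {x : X} {y : Y} {R ε : ℝ}
    (h : BallsGHClose l x y R ε) : BallsGHCloseIn ℓ^∞(ℕ, ℝ) l x y R ε := by
  obtain ⟨W, _, h⟩ := ballsGHClose_iff_exists.1 h
  exact h.toLp

theorem PointedIsometric.symm {Y Y' : Type*} [MetricSpace Y] [MetricSpace Y'] {y : Y} {y' : Y'}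
    (h : PointedIsometric y y') : PointedIsometric y' y := by
  obtain ⟨f, hf, hfs, rfl⟩ := h
  let e : Y ≃ᵢ Y' := { Equiv.ofBijective f ⟨hf.injective, hfs⟩ with isometry_toFun := hf }
  exact ⟨e.symm, e.symm.isometry, e.symm.surjective, e.symm_apply_apply y⟩

theorem exists_properSpace_equiv_dist_eq_mul (Y : Type*) [MetricSpace Y] [ProperSpace Y] {m : ℝ}
    (hm : 0 < m) : ∃ (Y' : Type w) (_ : MetricSpace Y') (_ : ProperSpace Y') (e : Y ≃ Y'),
      ∀ p q, dist (e p) (e q) = m * dist p q := by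
  let φ : Y → ℓ^∞(ℕ, ℝ) := fun p => m • kuratowskiEmbedding Y p
  have hφ : ∀ p q, dist (φ p) (φ q) = m * dist p q := fun p q => by
    rw [dist_smul₀, (kuratowskiEmbedding.isometry Y).dist_eq, Real.norm_of_nonneg hm.le]
  have hinj : Injective φ := fun p q hpq => by
    simpa [hpq, hm.ne'] using hφ p q
  let e : Y ≃ ULift.{w} (range φ) := (Equiv.ofInjective φ hinj).trans Equiv.ulift.symm
  have he : ∀ p q, dist (e p) (e q) = m * dist p q := hφ
  exact ⟨_, inferInstance, .of_surjective_dist_eq_mul e.surjective hm he, e, he⟩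

theorem IsTangentAt.of_surjective_dist_eq_mul {X Y Y' : Type*} [MetricSpace X] [ProperSpace X]
    [MetricSpace Y] [ProperSpace Y] [MetricSpace Y'] {x : X} {y : Y} (h : IsTangentAt x Y y)
    {ψ : Y' → Y} (hψ : Surjective ψ) {c : ℝ} (hc : 0 < c)
    (hdist : ∀ p q, dist (ψ p) (ψ q) = c * dist p q) {y' : Y'} (hy : ψ y' = y) :
    IsTangentAt x Y' y' := by
  obtain ⟨lam, hpos, htop, hclose⟩ := h
  refine ⟨fun j => lam j / c, fun j => div_pos (hpos j) hc, htop.atTop_div_const hc,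
    fun R hR ε hε => ?_⟩
  filter_upwards [hclose (c * R) (mul_pos hc hR) (c * ε) (mul_pos hc hε)] with j hj
  have h := hj.toLp.rescale hψ hc hdist hy
  rw [mul_div_cancel_left₀ _ hc.ne', mul_div_cancel_left₀ _ hc.ne'] at h
  exact BallsGHClose.of_lp h

def IsSelfSimilarAt {Y : Type*} [MetricSpace Y] (y : Y) : Prop :=
  ∀ m > (0 : ℝ), ∃ G : Y → Y, Surjective G ∧ G y = y ∧ ∀ p q, dist (G p) (G q) = m * dist p q

theorem IsTangentAt.isSelfSimilarAt {X Y : Type*} [MetricSpace X] [ProperSpace X]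
    [MetricSpace Y] [ProperSpace Y] {x : X} {y : Y} (hY : IsTangentAt x Y y)
    (huniq : ∀ (Y' : Type w) [MetricSpace Y'] [ProperSpace Y'] (y' : Y'),
      IsTangentAt x Y' y' → PointedIsometric y y') :
    IsSelfSimilarAt y := by
  intro m hm
  obtain ⟨Y', _, _, e, he⟩ := exists_properSpace_equiv_dist_eq_mul.{w} Y (inv_pos.2 hm)
  have he' : ∀ p q, dist (e.symm p) (e.symm q) = m * dist p q := fun p q => by
    have := he (e.symm p) (e.symm q)
    rw [e.apply_symm_apply, e.apply_symm_apply] at this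
    rw [this, mul_inv_cancel_left₀ hm.ne']
  obtain ⟨F, hF, hFs, hFy⟩ := huniq Y' (e y)
    (hY.of_surjective_dist_eq_mul e.symm.surjective hm he' (e.symm_apply_apply y))
  exact ⟨e.symm ∘ F, e.symm.surjective.comp hFs, by simp [hFy], fun p q => by
    simp [he', hF.dist_eq]⟩

theorem IsSelfSimilarAt.ballsGHClose_one {Y Z : Type*} [MetricSpace Y] [MetricSpace Z] {y : Y}
    {z : Z} (hY : IsSelfSimilarAt y) (hZ : IsTangentAt y Z z) {R ε : ℝ} (hR : 0 < R)
    (hε : 0 < ε) : BallsGHClose 1 y z R ε := by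
  obtain ⟨μ, hpos, -, hclose⟩ := hZ
  obtain ⟨k, hk⟩ := (hclose R hR ε hε).exists
  obtain ⟨W, _, hk⟩ := ballsGHClose_iff_exists.1 hk
  obtain ⟨G, hGs, hGy, hG⟩ := hY (μ k)⁻¹ (inv_pos.2 (hpos k))
  have h := hk.comp_left (hpos k) hGs (inv_pos.2 (hpos k)) hG hGy
  rw [mul_inv_cancel₀ (hpos k).ne'] at h
  exact ballsGHClose_iff_exists.2 ⟨W, _, h⟩

theorem IsTangentAt.of_ballsGHClose_one {X Y Z : Type*} [MetricSpace X] [ProperSpace X]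
    [MetricSpace Y] [MetricSpace Z] [ProperSpace Z] {x : X} {y : Y} {z : Z}
    (h : IsTangentAt x Y y) (hyz : ∀ R > 0, ∀ ε > 0, BallsGHClose 1 y z R ε) :
    IsTangentAt x Z z := by
  obtain ⟨lam, hpos, htop, hclose⟩ := h
  refine ⟨lam, hpos, htop, fun R hR ε hε => ?_⟩
  filter_upwards [hclose R hR (ε / 2) (half_pos hε)] with j hj
  obtain ⟨V₁, _, h₁⟩ := ballsGHClose_iff_exists.1 hj
  obtain ⟨V₂, _, h₂⟩ := ballsGHClose_iff_exists.1 (hyz R hR (ε / 2) (half_pos hε))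
  obtain ⟨V, _, h⟩ := h₁.trans h₂ (hpos j).le hR.le
  rw [add_halves] at h
  exact BallsGHClose.of_lp h.toLp

theorem tangent_of_tangent_is_self_general {X : Type u} [MetricSpace X] [ProperSpace X]
    [MeasurableSpace X] (μ : Measure X)
    (huniq : ∀ᵐ x ∂μ, ∀ (Y : Type v) [MetricSpace Y] [ProperSpace Y] (y : Y)
      (Y' : Type w) [MetricSpace Y'] [ProperSpace Y'] (y' : Y'),
      IsTangentAt x Y y → IsTangentAt x Y' y' → PointedIsometric y y') :
    ∀ᵐ x ∂μ, ∀ (Y : Type v) [MetricSpace Y] [ProperSpace Y] (y : Y),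
      IsTangentAt x Y y →
        ∀ (Z : Type w) [MetricSpace Z] [ProperSpace Z] (z : Z),
          IsTangentAt y Z z → PointedIsometric z y := by
  filter_upwards [huniq] with x hx Y _ _ y hY Z _ _ z hZ
  have hself : IsSelfSimilarAt y := hY.isSelfSimilarAt fun Y' _ _ y' => hx Y y Y' y' hY
  have hZx : IsTangentAt x Z z :=
    hY.of_ballsGHClose_one fun R hR ε hε => hself.ballsGHClose_one hZ hR hε
  exact (hx Y y Z z hY hZx).symm

/-- Let `(X, d)` be a proper geodesic metric space with a doubling measure
`μ`, and assume that for `μ`-a.e. `x` any two tangents of `X` at `x` are pointed isometric.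
Then for `μ`-a.e. `x`, every proper tangent `(Y, y)` of `X` at `x` satisfies: every proper
tangent of `Y` at `y` is pointed isometric to `(Y, y)` itself. -/
theorem tangent_of_tangent_is_self {X : Type u} [MetricSpace X] [ProperSpace X]
    [MeasurableSpace X] [BorelSpace X] (μ : Measure X)
    (hgeo : IsGeodesicSpace X) (hμ : IsDoublingMeasure μ)
    (huniq : ∀ᵐ x ∂μ, ∀ (Y : Type v) [MetricSpace Y] [ProperSpace Y] (y : Y)
      (Y' : Type w) [MetricSpace Y'] [ProperSpace Y'] (y' : Y'),
      IsTangentAt x Y y → IsTangentAt x Y' y' → PointedIsometric y y') :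
    ∀ᵐ x ∂μ, ∀ (Y : Type v) [MetricSpace Y] [ProperSpace Y] (y : Y),
      IsTangentAt x Y y →
        ∀ (Z : Type w) [MetricSpace Z] [ProperSpace Z] (z : Z),
          IsTangentAt y Z z → PointedIsometric z y :=
  tangent_of_tangent_is_self_general μ huniq
end

section
/- Let (Y, y) and (Y', y') be proper pointed metric spaces. Suppose that for every R > 0 there exists a surjective isometry from the closed ball of radius R centered at y in Y onto the closed ball of radius R centered at y' in Y' mapping y to y'. Then there exists a surjective isometry f : Y → Y' with f(y) = y'; i.e., (Y, y) and (Y', y') are pointed isometric. (This expresses that a tangent of a metric space at a point is well defined up to pointed isometry.) -/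
open Metric Filter MeasureTheory Topology

universe u v w

/-- Let `(Y, y)` and `(Y', y')` be proper pointed metric spaces. Suppose for
every `R > 0` there is a surjective isometry from the closed ball of radius `R` centered at
`y` in `Y` onto the closed ball of radius `R` centered at `y'` in `Y'` mapping `y` to `y'`.
Then `(Y, y)` and `(Y', y')` are pointed isometric. -/
theorem pointed_isometric_of_ball_isometries {Y : Type u} {Y' : Type v}
    [MetricSpace Y] [ProperSpace Y] [MetricSpace Y'] [ProperSpace Y']
    (y : Y) (y' : Y')
    (h : ∀ R : ℝ, ∀ hR : 0 < R,
      ∃ f : closedBall y R → closedBall y' R, Isometry f ∧ Function.Surjective f ∧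
        ((f ⟨y, mem_closedBall_self hR.le⟩ : Y') = y')) :
    PointedIsometric y y' := by
  classical
  have hpos : ∀ n : ℕ, (0:ℝ) < (n:ℝ) + 1 := fun n => by positivity
  choose fn hfn_iso hfn_surj hfn_y using fun n : ℕ => h ((n:ℝ) + 1) (hpos n)
  have hfn_bij : ∀ n, Function.Bijective (fn n) :=
    fun n => ⟨(hfn_iso n).injective, hfn_surj n⟩
  set gn : ∀ n : ℕ, closedBall y' ((n:ℝ)+1) → closedBall y ((n:ℝ)+1) :=
    fun n => Function.surjInv (hfn_surj n) with hgn_def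
  have hgn_left : ∀ n b, fn n (gn n b) = b := fun n b => Function.surjInv_eq (hfn_surj n) b
  have hdist_fn : ∀ (n : ℕ) (a b : closedBall y ((n:ℝ)+1)),
      dist ((fn n a : Y')) ((fn n b : Y')) = dist (a : Y) (b : Y) := by
    intro n a b
    have := (hfn_iso n).dist_eq a b
    rwa [Subtype.dist_eq, Subtype.dist_eq] at this
  have hdist_gn : ∀ (n : ℕ) (a b : closedBall y' ((n:ℝ)+1)),
      dist ((gn n a : Y)) ((gn n b : Y)) = dist (a : Y') (b : Y') := by
    intro n a b
    have := hdist_fn n (gn n a) (gn n b)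
    rw [hgn_left, hgn_left] at this
    exact this.symm
  set U : Ultrafilter ℕ := Ultrafilter.of atTop with hU_def
  have hU : (U : Filter ℕ) ≤ (atTop : Filter ℕ) := Ultrafilter.of_le _
  set F : ℕ → Y → Y' := fun n a =>
    if ha : a ∈ closedBall y ((n:ℝ)+1) then (fn n ⟨a, ha⟩ : Y') else y' with hF_def
  set G : ℕ → Y' → Y := fun n b =>
    if hb : b ∈ closedBall y' ((n:ℝ)+1) then (gn n ⟨b, hb⟩ : Y) else y with hG_def
  have hymem : ∀ n : ℕ, y ∈ closedBall y ((n:ℝ)+1) :=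
    fun n => mem_closedBall_self (hpos n).le
  have hFy : ∀ n, F n y = y' := by
    intro n
    simp only [hF_def, dif_pos (hymem n)]
    exact hfn_y n
  have hF_dist : ∀ (n : ℕ) (a b : Y), a ∈ closedBall y ((n:ℝ)+1) → b ∈ closedBall y ((n:ℝ)+1) →
      dist (F n a) (F n b) = dist a b := by
    intro n a b ha hb
    simp only [hF_def, dif_pos ha, dif_pos hb]
    exact hdist_fn n _ _
  have hF_ball : ∀ (n : ℕ) (a : Y), F n a ∈ closedBall y' (dist y a) := by
    intro n a
    simp only [hF_def]
    split_ifs with ha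
    · have h1 : dist ((fn n ⟨a, ha⟩ : Y')) y' = dist a y := by
        have h2 := hdist_fn n ⟨a, ha⟩ ⟨y, hymem n⟩
        rwa [hfn_y n] at h2
      rw [mem_closedBall, h1, dist_comm]
    · simp [dist_nonneg]
  have hG_ball : ∀ (n : ℕ) (b : Y'), G n b ∈ closedBall y (dist y' b) := by
    intro n b
    simp only [hG_def]
    split_ifs with hb
    · have h1 : dist ((gn n ⟨b, hb⟩ : Y)) y = dist b y' := by
        have h2 := hdist_fn n (gn n ⟨b, hb⟩) ⟨y, hymem n⟩
        rw [hgn_left, hfn_y n] at h2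
        rw [← h2]
      rw [mem_closedBall, h1, dist_comm]
    · simp [dist_nonneg]
  have hFG : ∀ (n : ℕ) (b : Y') (hb : b ∈ closedBall y' ((n:ℝ)+1)), F n (G n b) = b := by
    intro n b hb
    have hmem : ((gn n ⟨b, hb⟩ : closedBall y ((n:ℝ)+1)) : Y) ∈ closedBall y ((n:ℝ)+1) :=
      (gn n ⟨b, hb⟩).2
    simp only [hG_def, dif_pos hb, hF_def, dif_pos hmem]
    have h1 : (⟨((gn n ⟨b, hb⟩ : closedBall y ((n:ℝ)+1)) : Y), hmem⟩ :
        closedBall y ((n:ℝ)+1)) = gn n ⟨b, hb⟩ := rfl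
    rw [h1, hgn_left]
  -- eventual membership
  have hball_ev : ∀ a : Y, ∀ᶠ (n : ℕ) in (U : Filter ℕ), a ∈ closedBall y ((n:ℝ)+1) := by
    intro a
    apply hU
    filter_upwards [eventually_ge_atTop ⌈dist a y⌉₊] with n hn
    rw [mem_closedBall]
    calc dist a y ≤ (⌈dist a y⌉₊ : ℝ) := Nat.le_ceil _
      _ ≤ (n : ℝ) := Nat.cast_le.2 hn
      _ ≤ (n : ℝ) + 1 := by linarith
  have hball_ev' : ∀ b : Y', ∀ᶠ (n : ℕ) in (U : Filter ℕ), b ∈ closedBall y' ((n:ℝ)+1) := by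
    intro b
    apply hU
    filter_upwards [eventually_ge_atTop ⌈dist b y'⌉₊] with n hn
    rw [mem_closedBall]
    calc dist b y' ≤ (⌈dist b y'⌉₊ : ℝ) := Nat.le_ceil _
      _ ≤ (n : ℝ) := Nat.cast_le.2 hn
      _ ≤ (n : ℝ) + 1 := by linarith
  -- ultrafilter limits
  have hlimF : ∀ a : Y, ∃ z : Y', Tendsto (fun n => F n a) (U : Filter ℕ) (𝓝 z) := by
    intro a
    obtain ⟨z, -, hz⟩ := (isCompact_closedBall y' (dist y a)).ultrafilter_le_nhds
      (U.map (fun n => F n a)) (by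
        rw [Ultrafilter.coe_map, le_principal_iff, mem_map]
        exact univ_mem' fun n => hF_ball n a)
    rw [Ultrafilter.coe_map] at hz
    exact ⟨z, hz⟩
  have hlimG : ∀ b : Y', ∃ z : Y, Tendsto (fun n => G n b) (U : Filter ℕ) (𝓝 z) := by
    intro b
    obtain ⟨z, -, hz⟩ := (isCompact_closedBall y (dist y' b)).ultrafilter_le_nhds
      (U.map (fun n => G n b)) (by
        rw [Ultrafilter.coe_map, le_principal_iff, mem_map]
        exact univ_mem' fun n => hG_ball n b)
    rw [Ultrafilter.coe_map] at hz
    exact ⟨z, hz⟩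
  choose f hf using hlimF
  choose g hg using hlimG
  refine ⟨f, ?_, ?_, ?_⟩
  · -- isometry
    apply Isometry.of_dist_eq
    intro a b
    have h1 : Tendsto (fun n => dist (F n a) (F n b)) (U : Filter ℕ)
        (𝓝 (dist (f a) (f b))) := (hf a).dist (hf b)
    have h2 : Tendsto (fun n => dist (F n a) (F n b)) (U : Filter ℕ) (𝓝 (dist a b)) := by
      refine Tendsto.congr' ?_ (tendsto_const_nhds : Tendsto (fun _ : ℕ => dist a b) _ _)
      filter_upwards [hball_ev a, hball_ev b] with n ha hb
      exact (hF_dist n a b ha hb).symm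
    exact tendsto_nhds_unique h1 h2
  · -- surjective
    intro b
    refine ⟨g b, ?_⟩
    have h1 : Tendsto (fun n => dist (F n (g b)) b) (U : Filter ℕ)
        (𝓝 (dist (f (g b)) b)) := (hf (g b)).dist tendsto_const_nhds
    have hev : ∀ᶠ (n : ℕ) in (U : Filter ℕ), dist (g b) (G n b) = dist (F n (g b)) b := by
      filter_upwards [hball_ev' b, hball_ev (g b)] with n hb hgb
      have hGmem : G n b ∈ closedBall y ((n:ℝ)+1) := by
        simp only [hG_def, dif_pos hb]
        exact (gn n ⟨b, hb⟩).2
      calc dist (g b) (G n b) = dist (F n (g b)) (F n (G n b)) :=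
            (hF_dist n (g b) (G n b) hgb hGmem).symm
        _ = dist (F n (g b)) b := by rw [hFG n b hb]
    have h0 : Tendsto (fun n => dist (g b) (G n b)) (U : Filter ℕ) (𝓝 0) := by
      have := (tendsto_const_nhds : Tendsto (fun _ : ℕ => g b) (U : Filter ℕ)
        (𝓝 (g b))).dist (hg b)
      rwa [dist_self] at this
    have h2 : Tendsto (fun n => dist (F n (g b)) b) (U : Filter ℕ) (𝓝 0) :=
      Tendsto.congr' hev h0
    exact dist_eq_zero.1 (tendsto_nhds_unique h1 h2)
  · -- f y = y'
    have h2 : Tendsto (fun n => F n y) (U : Filter ℕ) (𝓝 y') := by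
      refine Tendsto.congr' ?_ (tendsto_const_nhds : Tendsto (fun _ : ℕ => y') _ _)
      filter_upwards with n
      exact (hFy n).symm
    exact tendsto_nhds_unique (hf y) h2
end

section
/- Let E be a finite-dimensional real normed vector space, with distance induced by its norm. For every point p ∈ E, the pointed space (E, 0) is a tangent of E at p, and every proper tangent (Y, y) of E at p is pointed isometric to (E, 0). That is, Tan(E, ‖·‖, p) = {(E, ‖·‖, 0)} for all p ∈ E. -/
open Metric Filter MeasureTheory

universe u v w

lemma ballsGHClose_self' {E : Type u} [NormedAddCommGroup E] [NormedSpace ℝ E]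
    (p : E) {l : ℝ} (hl : 0 < l) (R : ℝ) {ε : ℝ} (hε : 0 < ε) :
    ∃ (Z : Type u) (_ : MetricSpace Z) (f : E → Z) (g : E → Z),
    (∀ a ∈ closedBall p (R / l), ∀ b ∈ closedBall p (R / l),
      dist (f a) (f b) = l * dist a b) ∧
    (∀ a ∈ closedBall (0:E) R, ∀ b ∈ closedBall (0:E) R, dist (g a) (g b) = dist a b) ∧
    hausdorffDist (f '' closedBall p (R / l)) (g '' closedBall (0:E) R) < ε := by
  refine ⟨E, inferInstance, fun a => l • (a - p), id, ?_, ?_, ?_⟩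
  · intro a _ b _
    rw [dist_eq_norm, dist_eq_norm, ← smul_sub]
    rw [show a - p - (b - p) = a - b by abel]
    simp [norm_smul, abs_of_pos hl]
  · intro a _ b _; rfl
  · have himg : (fun a => l • (a - p)) '' closedBall p (R / l) = closedBall (0:E) R := by
      ext v
      simp only [Set.mem_image, mem_closedBall, dist_eq_norm]
      constructor
      · rintro ⟨a, ha, rfl⟩
        rw [sub_zero, norm_smul, Real.norm_eq_abs, abs_of_pos hl]
        calc l * ‖a - p‖ ≤ l * (R / l) := by
              apply mul_le_mul_of_nonneg_left _ hl.le
              simpa [dist_eq_norm] using ha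
          _ = R := by field_simp
      · intro hv
        refine ⟨p + l⁻¹ • v, ?_, ?_⟩
        · rw [add_sub_cancel_left, norm_smul, Real.norm_eq_abs, abs_of_pos (inv_pos.mpr hl),
            div_eq_inv_mul]
          exact mul_le_mul_of_nonneg_left (by simpa using hv) (inv_pos.mpr hl).le
        · rw [add_sub_cancel_left, smul_smul, mul_inv_cancel₀ hl.ne', one_smul]
    rw [himg, Set.image_id]
    rwa [hausdorffDist_self_zero]

lemma center_eq_zero' {E : Type u} [NormedAddCommGroup E] [NormedSpace ℝ E]
    {R : ℝ} (hR : 0 < R) {c : E} (h : ∀ v ∈ closedBall (0:E) R, dist v c ≤ R) : c = 0 := by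
  by_contra hc
  have hc' : 0 < ‖c‖ := norm_pos_iff.mpr hc
  have h1 := h (-((R / ‖c‖) • c)) (by
    simp [norm_smul, abs_of_pos (div_pos hR hc'), div_mul_cancel₀ _ hc'.ne', abs_of_pos hR])
  rw [dist_eq_norm, show -((R / ‖c‖) • c) - c = -((R / ‖c‖ + 1) • c) by
    rw [add_smul, one_smul]; abel, norm_neg, norm_smul, Real.norm_eq_abs,
    abs_of_pos (by positivity)] at h1
  rw [add_mul, div_mul_cancel₀ _ hc'.ne', one_mul] at h1
  linarith

lemma balls_isometric {E : Type u} [NormedAddCommGroup E] [NormedSpace ℝ E]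
    [FiniteDimensional ℝ E] (p : E) {Y : Type v} [MetricSpace Y] [ProperSpace Y] (y : Y)
    (lam : ℕ → ℝ) (hpos : ∀ j, 0 < lam j)
    (h : ∀ R > (0 : ℝ), ∀ ε > (0 : ℝ), ∀ᶠ j in atTop, BallsGHClose (lam j) p y R ε)
    {R : ℝ} (hR : 0 < R) :
    Nonempty (↥(closedBall y R) ≃ᵢ ↥(closedBall (0:E) R)) := by
  have hEne : (closedBall (0:E) R).Nonempty := ⟨0, mem_closedBall_self hR.le⟩
  have hYne : (closedBall y R).Nonempty := ⟨y, mem_closedBall_self hR.le⟩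
  haveI := hEne.to_subtype
  haveI := hYne.to_subtype
  haveI : CompactSpace ↥(closedBall (0:E) R) :=
    isCompact_iff_compactSpace.mp (isCompact_closedBall _ _)
  haveI : CompactSpace ↥(closedBall y R) :=
    isCompact_iff_compactSpace.mp (isCompact_closedBall _ _)
  have key : ∀ ε > (0:ℝ),
      GromovHausdorff.ghDist (↥(closedBall y R)) (↥(closedBall (0:E) R)) < ε := by
    intro ε hε
    obtain ⟨j, hj⟩ := (h R hR ε hε).exists
    obtain ⟨Z, _, f, g, hf, hg, hH⟩ := hj
    set l := lam j with hl
    have hl0 : 0 < l := hpos j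
    have hmem : ∀ v : ↥(closedBall (0:E) R), p + l⁻¹ • (v:E) ∈ closedBall p (R / l) := by
      intro v
      rw [mem_closedBall, dist_eq_norm, add_sub_cancel_left, norm_smul, Real.norm_eq_abs,
        abs_of_pos (inv_pos.mpr hl0), div_eq_inv_mul]
      exact mul_le_mul_of_nonneg_left (mem_closedBall_zero_iff.mp v.2)
        (inv_pos.mpr hl0).le
    set Φ : ↥(closedBall (0:E) R) → Z := fun v => f (p + l⁻¹ • (v:E)) with hΦ
    set Ψ : ↥(closedBall y R) → Z := fun b => g (b:Y) with hΨ
    have hΦi : Isometry Φ := by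
      apply Isometry.of_dist_eq
      intro v w
      rw [hΦ]
      dsimp only
      rw [hf _ (hmem v) _ (hmem w)]
      rw [Subtype.dist_eq, dist_eq_norm, dist_eq_norm,
        show p + l⁻¹ • (v:E) - (p + l⁻¹ • (w:E)) = l⁻¹ • ((v:E) - (w:E)) by
          rw [smul_sub]; abel]
      rw [norm_smul, Real.norm_eq_abs, abs_of_pos (inv_pos.mpr hl0), ← mul_assoc,
        mul_inv_cancel₀ hl0.ne', one_mul]
    have hΨi : Isometry Ψ := by
      apply Isometry.of_dist_eq
      intro a b
      rw [hΨ]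
      dsimp only
      rw [hg _ a.2 _ b.2, Subtype.dist_eq]
    have hrΦ : Set.range Φ = f '' closedBall p (R / l) := by
      apply Set.Subset.antisymm
      · rintro _ ⟨v, rfl⟩
        exact ⟨_, hmem v, rfl⟩
      · rintro _ ⟨a, ha, rfl⟩
        have hva : ‖l • (a - p)‖ ≤ R := by
          rw [norm_smul, Real.norm_eq_abs, abs_of_pos hl0]
          calc l * ‖a - p‖ ≤ l * (R / l) :=
                mul_le_mul_of_nonneg_left (by simpa [dist_eq_norm] using ha) hl0.le
            _ = R := by field_simp
        refine ⟨⟨l • (a - p), by simpa [dist_eq_norm] using hva⟩, ?_⟩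
        rw [hΦ]
        dsimp only
        rw [smul_smul, inv_mul_cancel₀ hl0.ne', one_smul]
        congr 1
        abel
    have hrΨ : Set.range Ψ = g '' closedBall y R := by
      rw [hΨ]
      ext z
      constructor
      · rintro ⟨b, rfl⟩; exact ⟨b, b.2, rfl⟩
      · rintro ⟨b, hb, rfl⟩; exact ⟨⟨b, hb⟩, rfl⟩
    calc GromovHausdorff.ghDist (↥(closedBall y R)) (↥(closedBall (0:E) R))
        ≤ hausdorffDist (Set.range Ψ) (Set.range Φ) :=
          GromovHausdorff.ghDist_le_hausdorffDist hΨi hΦi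
      _ = hausdorffDist (f '' closedBall p (R / l)) (g '' closedBall y R) := by
          rw [hrΦ, hrΨ, hausdorffDist_comm]
      _ < ε := hH
  have h0 : GromovHausdorff.ghDist (↥(closedBall y R)) (↥(closedBall (0:E) R)) = 0 := by
    by_contra h0
    have hpos' : 0 < GromovHausdorff.ghDist (↥(closedBall y R)) (↥(closedBall (0:E) R)) :=
      lt_of_le_of_ne dist_nonneg (Ne.symm h0)
    exact absurd (key _ hpos') (lt_irrefl _)
  rw [GromovHausdorff.ghDist] at h0
  exact GromovHausdorff.toGHSpace_eq_toGHSpace_iff_isometryEquiv.mp (eq_of_dist_eq_zero h0)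

lemma glue_isometries {E : Type u} [NormedAddCommGroup E] [NormedSpace ℝ E]
    [FiniteDimensional ℝ E] {Y : Type v} [MetricSpace Y] [ProperSpace Y] (y : Y)
    (he : ∀ n : ℕ, Nonempty (↥(closedBall y ((n:ℝ)+1)) ≃ᵢ ↥(closedBall (0:E) ((n:ℝ)+1)))) :
    ∃ f : Y → E, Isometry f ∧ Function.Surjective f ∧ f y = 0 := by
  classical
  set e : ∀ n : ℕ, ↥(closedBall y ((n:ℝ)+1)) ≃ᵢ ↥(closedBall (0:E) ((n:ℝ)+1)) :=
    fun n => Classical.choice (he n) with he'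
  set φ : ℕ → Y → E := fun n a =>
    if h : a ∈ closedBall y ((n:ℝ)+1) then ((e n) ⟨a, h⟩ : E) else 0 with hφ
  have hyb : ∀ n : ℕ, y ∈ closedBall y ((n:ℝ)+1) :=
    fun n => mem_closedBall_self (by positivity)
  -- φ is an isometry on the ball
  have hiso : ∀ n : ℕ, ∀ a ∈ closedBall y ((n:ℝ)+1), ∀ b ∈ closedBall y ((n:ℝ)+1),
      dist (φ n a) (φ n b) = dist a b := by
    intro n a ha b hb
    rw [hφ]
    dsimp only
    rw [dif_pos ha, dif_pos hb, ← Subtype.dist_eq, (e n).isometry.dist_eq, Subtype.dist_eq]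
  -- φ is surjective onto the ball
  have hsurj : ∀ n : ℕ, ∀ z ∈ closedBall (0:E) ((n:ℝ)+1),
      ∃ a ∈ closedBall y ((n:ℝ)+1), φ n a = z := by
    intro n z hz
    refine ⟨((e n).symm ⟨z, hz⟩ : Y), ((e n).symm ⟨z, hz⟩).2, ?_⟩
    rw [hφ]
    dsimp only
    rw [dif_pos ((e n).symm ⟨z, hz⟩).2]
    rw [Subtype.coe_eta, IsometryEquiv.apply_symm_apply]
  -- φ maps the center to the center
  have hcenter : ∀ n : ℕ, φ n y = 0 := by
    intro n
    apply center_eq_zero' (R := (n:ℝ)+1) (by positivity)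
    intro v hv
    obtain ⟨b, hb, hbv⟩ := hsurj n v hv
    rw [← hbv, hiso n b hb y (hyb n)]
    exact mem_closedBall.mp hb
  -- membership eventually
  have hball : ∀ a : Y, ∀ᶠ n : ℕ in atTop, a ∈ closedBall y ((n:ℝ)+1) := by
    intro a
    filter_upwards [eventually_ge_atTop ⌈dist a y⌉₊] with n hn
    rw [mem_closedBall]
    calc dist a y ≤ (⌈dist a y⌉₊ : ℝ) := Nat.le_ceil _
      _ ≤ (n : ℝ) := Nat.cast_le.mpr hn
      _ ≤ (n : ℝ) + 1 := by linarith
  -- ultrafilter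
  obtain ⟨U, hU⟩ := Filter.exists_ultrafilter_le (atTop : Filter ℕ)
  -- define the limit map
  have hlim : ∀ a : Y, ∃ z : E, Tendsto (fun n => φ n a) (↑U) (nhds z) := by
    intro a
    have hmem : ∀ᶠ n : ℕ in atTop, φ n a ∈ closedBall (0:E) (dist a y) := by
      filter_upwards [hball a] with n hn
      rw [mem_closedBall, ← hcenter n]
      exact (hiso n a hn y (hyb n)).le
    have hmemU : ∀ᶠ n : ℕ in ↑U, φ n a ∈ closedBall (0:E) (dist a y) :=
      hmem.filter_mono hU
    obtain ⟨zz, _, hzz⟩ := (isCompact_closedBall (0:E) (dist a y)).ultrafilter_le_nhds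
      (U.map (fun n => φ n a)) (by rwa [Ultrafilter.coe_map, le_principal_iff, mem_map])
    rw [Ultrafilter.coe_map] at hzz
    exact ⟨zz, hzz⟩
  choose ψ hψ using hlim
  have hψy : ψ y = 0 := by
    have : Tendsto (fun _ : ℕ => (0:E)) (↑U) (nhds (0:E)) := tendsto_const_nhds
    refine tendsto_nhds_unique ?_ this
    have := hψ y
    simpa [hcenter] using this
  refine ⟨ψ, ?_, ?_, hψy⟩
  · apply Isometry.of_dist_eq
    intro a b
    have hev : ∀ᶠ n : ℕ in ↑U, dist (φ n a) (φ n b) = dist a b := by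
      apply Filter.Eventually.filter_mono hU
      filter_upwards [hball a, hball b] with n hna hnb
      exact hiso n a hna b hnb
    have h1 : Tendsto (fun n => dist (φ n a) (φ n b)) (↑U) (nhds (dist (ψ a) (ψ b))) :=
      (hψ a).dist (hψ b)
    have h2 : Tendsto (fun n => dist (φ n a) (φ n b)) (↑U) (nhds (dist a b)) :=
      tendsto_const_nhds.congr' (by filter_upwards [hev] with n hn using hn.symm)
    exact tendsto_nhds_unique h1 h2
  · intro z
    have hzball : ∀ᶠ n : ℕ in atTop, z ∈ closedBall (0:E) ((n:ℝ)+1) := by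
      filter_upwards [eventually_ge_atTop ⌈‖z‖⌉₊] with n hn
      rw [mem_closedBall_zero_iff]
      calc ‖z‖ ≤ (⌈‖z‖⌉₊ : ℝ) := Nat.le_ceil _
        _ ≤ (n : ℝ) := Nat.cast_le.mpr hn
        _ ≤ (n : ℝ) + 1 := by linarith
    have hsel : ∀ n : ℕ, ∃ a : Y, z ∈ closedBall (0:E) ((n:ℝ)+1) →
        a ∈ closedBall y ((n:ℝ)+1) ∧ φ n a = z := by
      intro n
      by_cases hz : z ∈ closedBall (0:E) ((n:ℝ)+1)
      · obtain ⟨a, ha, ha'⟩ := hsurj n z hz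
        exact ⟨a, fun _ => ⟨ha, ha'⟩⟩
      · exact ⟨y, fun h => absurd h hz⟩
    choose s hs using hsel
    have hdist : ∀ᶠ n : ℕ in atTop, dist (s n) y = ‖z‖ := by
      filter_upwards [hzball] with n hn
      obtain ⟨hmem, heq⟩ := hs n hn
      rw [← hiso n (s n) hmem y (hyb n), heq, hcenter n, dist_zero_right]
    -- a cluster point of s
    have hsb : ∀ᶠ n : ℕ in atTop, s n ∈ closedBall y ‖z‖ := by
      filter_upwards [hdist] with n hn
      exact mem_closedBall.mpr hn.le
    have hsbU : ∀ᶠ n : ℕ in ↑U, s n ∈ closedBall y ‖z‖ := hsb.filter_mono hU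
    obtain ⟨a, _, hta⟩ := (isCompact_closedBall y ‖z‖).ultrafilter_le_nhds
      (U.map s) (by rwa [Ultrafilter.coe_map, le_principal_iff, mem_map])
    rw [Ultrafilter.coe_map] at hta
    have hta' : Tendsto s (↑U) (nhds a) := hta
    refine ⟨a, ?_⟩
    have hev : ∀ᶠ n : ℕ in ↑U, dist (φ n a) z = dist a (s n) := by
      apply Filter.Eventually.filter_mono hU
      filter_upwards [hball a, hzball] with n hna hnz
      obtain ⟨hmem, heq⟩ := hs n hnz
      rw [← heq, hiso n a hna (s n) hmem]
    have h1 : Tendsto (fun n => dist (φ n a) z) (↑U) (nhds (dist (ψ a) z)) :=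
      (hψ a).dist tendsto_const_nhds
    have h2 : Tendsto (fun n => dist (φ n a) z) (↑U) (nhds (dist a a)) :=
      (tendsto_const_nhds.dist hta').congr'
        (by filter_upwards [hev] with n hn using hn.symm)
    have h3 : dist (ψ a) z = dist a a := tendsto_nhds_unique h1 h2
    rw [dist_self] at h3
    exact eq_of_dist_eq_zero h3


/-- Let `E` be a finite-dimensional real normed vector space with the
distance induced by its norm. For every `p ∈ E`, the pointed space `(E, 0)` is a tangent of
`E` at `p`, and every proper tangent `(Y, y)` of `E` at `p` is pointed isometric to `(E, 0)`;
that is, `Tan(E, ‖·‖, p) = {(E, ‖·‖, 0)}`. -/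
theorem tangent_of_normed_space {E : Type u} [NormedAddCommGroup E] [NormedSpace ℝ E]
    [FiniteDimensional ℝ E] (p : E) :
    IsTangentAt p E (0 : E) ∧
      ∀ (Y : Type v) [MetricSpace Y] [ProperSpace Y] (y : Y),
        IsTangentAt p Y y → PointedIsometric y (0 : E) := by
  constructor
  · refine ⟨fun j => (j : ℝ) + 1, fun j => by positivity, ?_, ?_⟩
    · exact tendsto_atTop_add_const_right _ 1 tendsto_natCast_atTop_atTop
    · intro R _ ε hε
      filter_upwards with j
      obtain ⟨Z, _, f, g, hf, hg, hH⟩ :=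
        ballsGHClose_self' p (show (0:ℝ) < (j:ℝ) + 1 by positivity) R hε
      exact ⟨Z, inferInstance, f, g, hf, hg, hH⟩
  · intro Y _ _ y hT
    obtain ⟨lam, hpos, _, h⟩ := hT
    have he : ∀ n : ℕ,
        Nonempty (↥(closedBall y ((n:ℝ)+1)) ≃ᵢ ↥(closedBall (0:E) ((n:ℝ)+1))) :=
      fun n => balls_isometric p y lam hpos h (by positivity)
    exact glue_isometries y he
end

section
/- Fix α ∈ (0, 1) and equip ℝ with the snowflake distance d_α(x, y) = |x − y|^α. For every point p ∈ ℝ, the pointed space ((ℝ, d_α), 0) is a tangent of (ℝ, d_α) at p, and every proper tangent (Y, y) of (ℝ, d_α) at p is pointed isometric to ((ℝ, d_α), 0); i.e., the snowflaked real line has a unique tangent at every point, equal to itself. -/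
open Metric Filter MeasureTheory

universe u v w

/-- Type synonym for `ℝ` carrying the snowflake metric `d_α(x, y) = |x − y| ^ α`. -/
def Snowflake (_α : ℝ) : Type := ℝ

/-- The identification of `Snowflake α` with `ℝ`. -/
def Snowflake.toReal {α : ℝ} (x : Snowflake α) : ℝ := x

/-- The identification of `ℝ` with `Snowflake α`. -/
def Snowflake.ofReal (α : ℝ) (x : ℝ) : Snowflake α := x

/-- The snowflake metric `d_α(x, y) = |x − y| ^ α` on `ℝ`, for `0 < α < 1`. -/
noncomputable def snowflakeMetricSpace (α : ℝ) (h0 : 0 < α) (h1 : α < 1) :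
    MetricSpace (Snowflake α) where
  dist x y := |x.toReal - y.toReal| ^ α
  dist_self x := by
    simp [Real.zero_rpow h0.ne']
  dist_comm x y := by
    simp [abs_sub_comm x.toReal y.toReal]
  dist_triangle x y z := by
    have key : ∀ u v : ℝ, 0 ≤ u → 0 ≤ v → (u + v) ^ α ≤ u ^ α + v ^ α := by
      intro u v hu hv
      have h := NNReal.rpow_add_le_add_rpow u.toNNReal v.toNNReal h0.le h1.le
      have h' := NNReal.coe_le_coe.2 h
      simpa [NNReal.coe_rpow, Real.coe_toNNReal _ hu, Real.coe_toNNReal _ hv] using h'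
    calc |x.toReal - z.toReal| ^ α
        ≤ (|x.toReal - y.toReal| + |y.toReal - z.toReal|) ^ α := by
          exact Real.rpow_le_rpow (abs_nonneg _) (abs_sub_le _ _ _) h0.le
      _ ≤ |x.toReal - y.toReal| ^ α + |y.toReal - z.toReal| ^ α :=
          key _ _ (abs_nonneg _) (abs_nonneg _)
  eq_of_dist_eq_zero {x y} h := by
    have hxy : |x.toReal - y.toReal| = 0 := by
      by_contra hne
      have habs : 0 < |x.toReal - y.toReal| :=
        lt_of_le_of_ne (abs_nonneg _) (Ne.symm hne)
      exact absurd h (ne_of_gt (Real.rpow_pos_of_pos habs α))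
    have : x.toReal = y.toReal := by
      have := abs_eq_zero.1 hxy
      linarith [sub_eq_zero.1 this]
    exact this

/-!
The dilations `a ↦ q + l ^ (1/α) (a - p)` multiply the snowflake distance by `l` and move any
point to any other. So every rescaling of the snowflake line at `p` is the snowflake line based
at `0`, which is therefore a tangent; and the balls `B(y, R)` of a proper tangent `(Y, y)` are at
Gromov–Hausdorff distance `0` from, hence isometric to, the balls `B(0, R)` of the snowflake line.
Such an isometry sends `y` to `0`, the only center of `B(0, R)`, so `dist ^ (1/α)` turns every
ball `B(y, R)` into the interval `[-R ^ (1/α), R ^ (1/α)]` with `y` at `0`. These interval charts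
are unique up to sign, since by polarization `ψ z * ψ w` is determined by the mutual distances of
`y`, `z` and `w`; normalized at a point `z` at distance `1` from `y` they glue to a global
isometry onto the snowflake line.
-/

section DilationHomogeneous

def IsDilationHomogeneous (X : Type u) [MetricSpace X] : Prop :=
  ∀ (p q : X) (l : ℝ), 0 < l →
    ∃ D : X → X, Function.Surjective D ∧ D p = q ∧ ∀ a b, dist (D a) (D b) = l * dist a b

variable {X : Type u} {Y : Type v} [MetricSpace X] [MetricSpace Y]

theorem image_closedBall_of_dist_eq_mul_s9 {f : X → Y} (hf : Function.Surjective f) {l : ℝ}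
    (hl : 0 < l) (hd : ∀ a b, dist (f a) (f b) = l * dist a b) (x : X) (r : ℝ) :
    f '' closedBall x r = closedBall (f x) (l * r) := by
  ext z
  constructor
  · rintro ⟨a, ha, rfl⟩
    rw [mem_closedBall, hd]
    exact mul_le_mul_of_nonneg_left ha hl.le
  · intro hz
    obtain ⟨a, rfl⟩ := hf z
    rw [mem_closedBall, hd] at hz
    exact ⟨a, le_of_mul_le_mul_left hz hl, rfl⟩

theorem IsDilationHomogeneous.isTangentAt (hX : IsDilationHomogeneous X) (p q : X) :
    IsTangentAt p X q := by
  refine ⟨fun j => (j : ℝ) + 1, fun j => by positivity,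
    tendsto_atTop_add_const_right _ 1 tendsto_natCast_atTop_atTop,
    fun R _ ε hε => Eventually.of_forall fun j => ?_⟩
  obtain ⟨D, hD, hDp, hDd⟩ := hX p q ((j : ℝ) + 1) (by positivity)
  refine ⟨X, inferInstance, D, id, fun a _ b _ => hDd a b, fun a _ b _ => rfl, ?_⟩
  rwa [image_closedBall_of_dist_eq_mul_s9 hD (by positivity) hDd, hDp,
    mul_div_cancel₀ _ (by positivity), Set.image_id, hausdorffDist_self_zero]

theorem nonempty_isometryEquiv_of_forall_hausdorffDist_lt {A : Type u} {B : Type v}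
    [MetricSpace A] [MetricSpace B] [CompactSpace A] [CompactSpace B] [Nonempty A] [Nonempty B]
    (h : ∀ ε > (0 : ℝ), ∃ (Z : Type w) (_ : MetricSpace Z) (f : A → Z) (g : B → Z),
      Isometry f ∧ Isometry g ∧ hausdorffDist (Set.range f) (Set.range g) < ε) :
    Nonempty (A ≃ᵢ B) := by
  have hGH : GromovHausdorff.ghDist A B ≤ 0 := le_of_forall_pos_lt_add fun ε hε => by
    obtain ⟨Z, _, f, g, hf, hg, hH⟩ := h ε hε
    rw [zero_add]
    exact (GromovHausdorff.ghDist_le_hausdorffDist hf hg).trans_lt hH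
  exact GromovHausdorff.toGHSpace_eq_toGHSpace_iff_isometryEquiv.1 (dist_le_zero.1 hGH)

theorem IsDilationHomogeneous.nonempty_isometryEquiv_closedBall [ProperSpace X] [ProperSpace Y]
    (hX : IsDilationHomogeneous X) {p : X} {y : Y} (hT : IsTangentAt p Y y) (q : X) {R : ℝ}
    (hR : 0 < R) : Nonempty (closedBall q R ≃ᵢ closedBall y R) := by
  obtain ⟨lam, hpos, -, hclose⟩ := hT
  have := isCompact_iff_compactSpace.1 (isCompact_closedBall q R)
  have := isCompact_iff_compactSpace.1 (isCompact_closedBall y R)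
  have : Nonempty (closedBall q R) := ⟨⟨q, mem_closedBall_self hR.le⟩⟩
  have : Nonempty (closedBall y R) := ⟨⟨y, mem_closedBall_self hR.le⟩⟩
  refine nonempty_isometryEquiv_of_forall_hausdorffDist_lt fun ε hε => ?_
  obtain ⟨j, Z, _, f, g, hf, hg, hH⟩ := (hclose R hR ε hε).exists
  have hl := hpos j
  obtain ⟨D, hD, hDq, hDd⟩ := hX q p (lam j)⁻¹ (inv_pos.2 hl)
  have hDball : D '' closedBall q R = closedBall p (R / lam j) := by
    rw [image_closedBall_of_dist_eq_mul_s9 hD (inv_pos.2 hl) hDd, hDq, inv_mul_eq_div]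
  have hDmem (a : closedBall q R) : D a ∈ closedBall p (R / lam j) :=
    hDball ▸ Set.mem_image_of_mem D a.2
  refine ⟨Z, inferInstance, fun a => f (D a), fun b => g b, ?_, ?_, ?_⟩
  · refine Isometry.of_dist_eq fun a b => ?_
    rw [hf _ (hDmem a) _ (hDmem b), hDd, ← mul_assoc, mul_inv_cancel₀ hl.ne', one_mul,
      Subtype.dist_eq]
  · exact Isometry.of_dist_eq fun a b => hg a a.2 b b.2
  · rwa [← hDball, Set.image_image, Set.image_eq_range, Set.image_eq_range] at hH

end DilationHomogeneous

section IntervalChart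

variable {Y : Type v} [MetricSpace Y] {β : ℝ} {y : Y} {R : ℝ} {ψ : Y → ℝ}

structure IsIntervalChart (β : ℝ) (y : Y) (R : ℝ) (ψ : Y → ℝ) : Prop where
  map_center : ψ y = 0
  abs_sub : ∀ a ∈ closedBall y R, ∀ b ∈ closedBall y R, |ψ a - ψ b| = dist a b ^ β
  Icc_subset : Set.Icc (-R ^ β) (R ^ β) ⊆ ψ '' closedBall y R

namespace IsIntervalChart

theorem abs_apply (hψ : IsIntervalChart β y R ψ) {w : Y} (hw : w ∈ closedBall y R) :
    |ψ w| = dist w y ^ β := by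
  have hy : y ∈ closedBall y R := mem_closedBall_self (dist_nonneg.trans hw)
  rw [← hψ.abs_sub w hw y hy, hψ.map_center, sub_zero]

/-- Polarization: a chart is determined, up to the sign `ψ z`, by the distances to `y` and `z`. -/
theorem mul_apply (hψ : IsIntervalChart β y R ψ) {z w : Y} (hz : z ∈ closedBall y R)
    (hw : w ∈ closedBall y R) :
    ψ z * ψ w = ((dist w y ^ β) ^ 2 + (dist z y ^ β) ^ 2 - (dist w z ^ β) ^ 2) / 2 := by
  rw [← hψ.abs_apply hw, ← hψ.abs_apply hz, ← hψ.abs_sub w hw z hz, sq_abs, sq_abs, sq_abs]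
  ring

theorem const_mul (hψ : IsIntervalChart β y R ψ) {σ : ℝ} (hσ : |σ| = 1) :
    IsIntervalChart β y R fun w => σ * ψ w where
  map_center := by rw [hψ.map_center, mul_zero]
  abs_sub a ha b hb := by rw [← mul_sub, abs_mul, hσ, one_mul, hψ.abs_sub a ha b hb]
  Icc_subset t ht := by
    have hσt : σ * t ∈ Set.Icc (-R ^ β) (R ^ β) := by
      rw [Set.mem_Icc, ← abs_le, abs_mul, hσ, one_mul, abs_le]
      exact ht
    obtain ⟨b, hb, hbt⟩ := hψ.Icc_subset hσt
    refine ⟨b, hb, ?_⟩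
    dsimp only
    rw [hbt, ← mul_assoc, ← sq, ← sq_abs, hσ, one_pow, one_mul]

theorem congr (hψ : IsIntervalChart β y R ψ) (hR : 0 ≤ R) {φ : Y → ℝ}
    (h : Set.EqOn φ ψ (closedBall y R)) : IsIntervalChart β y R φ where
  map_center := by rw [h (mem_closedBall_self hR), hψ.map_center]
  abs_sub a ha b hb := by rw [h ha, h hb, hψ.abs_sub a ha b hb]
  Icc_subset := by rw [h.image_eq]; exact hψ.Icc_subset

end IsIntervalChart

theorem exists_forall_isIntervalChart
    (h : ∀ R > 0, ∃ ψ : Y → ℝ, IsIntervalChart β y R ψ) :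
    ∃ Φ : Y → ℝ, ∀ R ≥ 1, IsIntervalChart β y R Φ := by
  obtain ⟨ψ₁, hψ₁⟩ := h 1 one_pos
  obtain ⟨z, hz, hz₁⟩ : ∃ z ∈ closedBall y 1, ψ₁ z = 1 :=
    hψ₁.Icc_subset ⟨by rw [Real.one_rpow]; norm_num, by rw [Real.one_rpow]⟩
  have hzy : dist z y ^ β = 1 := by rw [← hψ₁.abs_apply hz, hz₁, abs_one]
  -- the polarization formula of a chart taking the value `1` at `z`
  refine ⟨fun w => ((dist w y ^ β) ^ 2 + 1 - (dist w z ^ β) ^ 2) / 2, fun R hR => ?_⟩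
  obtain ⟨ψ, hψ⟩ := h R (by linarith)
  have hzR : z ∈ closedBall y R := closedBall_subset_closedBall hR hz
  refine (hψ.const_mul (by rw [hψ.abs_apply hzR, hzy])).congr (by linarith) fun w hw => ?_
  dsimp only
  rw [hψ.mul_apply hzR hw, hzy, one_pow]

end IntervalChart

namespace Snowflake

variable {α : ℝ}

@[simp] theorem toReal_ofReal (x : ℝ) : (ofReal α x).toReal = x := rfl

variable [Fact (0 < α)] [Fact (α < 1)]

noncomputable instance : MetricSpace (Snowflake α) := snowflakeMetricSpace α Fact.out Fact.out

theorem dist_eq (a b : Snowflake α) : dist a b = |a.toReal - b.toReal| ^ α := rfl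

theorem abs_sub_eq (a b : Snowflake α) : |a.toReal - b.toReal| = dist a b ^ α⁻¹ := by
  rw [dist_eq, Real.rpow_rpow_inv (abs_nonneg _) (Fact.out : 0 < α).ne']

theorem dist_le_iff {a b : Snowflake α} {R : ℝ} (hR : 0 ≤ R) :
    dist a b ≤ R ↔ |a.toReal - b.toReal| ≤ R ^ α⁻¹ := by
  rw [Real.le_rpow_inv_iff_of_pos (abs_nonneg _) hR Fact.out, dist_eq]

theorem continuous_ofReal : Continuous (ofReal α) := by
  refine continuous_iff_continuousAt.2 fun x => tendsto_iff_dist_tendsto_zero.2 ?_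
  have h : Continuous fun a : ℝ => |a - x| ^ α :=
    (by fun_prop : Continuous fun a : ℝ => |a - x|).rpow_const
      fun _ => Or.inr (Fact.out : 0 < α).le
  have := h.tendsto x
  rwa [sub_self, abs_zero, Real.zero_rpow (Fact.out : 0 < α).ne'] at this

theorem closedBall_eq_image {c : Snowflake α} {R : ℝ} (hR : 0 ≤ R) :
    closedBall c R = ofReal α '' closedBall c.toReal (R ^ α⁻¹) := by
  ext x
  rw [mem_closedBall, dist_le_iff hR]
  constructor
  · intro h
    exact ⟨x.toReal, by rwa [mem_closedBall, Real.dist_eq], rfl⟩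
  · rintro ⟨a, ha, rfl⟩
    rwa [mem_closedBall, Real.dist_eq] at ha

instance : ProperSpace (Snowflake α) :=
  ProperSpace.of_isCompact_closedBall_of_le 0 fun _ _ hR => by
    rw [closedBall_eq_image hR]
    exact (isCompact_closedBall _ _).image continuous_ofReal

theorem isDilationHomogeneous : IsDilationHomogeneous (Snowflake α) := by
  intro p q l hl
  have hs : 0 < l ^ α⁻¹ := Real.rpow_pos_of_pos hl _
  refine ⟨fun a => ofReal α (q.toReal + l ^ α⁻¹ * (a.toReal - p.toReal)),
    fun b => ⟨ofReal α (p.toReal + (b.toReal - q.toReal) / l ^ α⁻¹), ?_⟩, ?_,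
    fun a b => ?_⟩
  · show ofReal α _ = ofReal α b.toReal
    congr 1
    rw [toReal_ofReal]
    field_simp
    ring
  · show ofReal α _ = ofReal α q.toReal
    rw [sub_self, mul_zero, add_zero]
  · rw [dist_eq, dist_eq, toReal_ofReal, toReal_ofReal, add_sub_add_left_eq_sub, ← mul_sub,
      sub_sub_sub_cancel_right, abs_mul, abs_of_pos hs, Real.mul_rpow hs.le (abs_nonneg _),
      Real.rpow_inv_rpow hl.le (Fact.out : 0 < α).ne']

theorem eq_of_closedBall_subset {x c : Snowflake α} {R : ℝ} (hR : 0 ≤ R)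
    (h : closedBall x R ⊆ closedBall c R) : c = x := by
  have hr : 0 ≤ R ^ α⁻¹ := Real.rpow_nonneg hR _
  have hshift (t : ℝ) (ht : |t| ≤ R ^ α⁻¹) : |x.toReal + t - c.toReal| ≤ R ^ α⁻¹ := by
    refine (dist_le_iff hR).1 (h (a := ofReal α (x.toReal + t)) ((dist_le_iff hR).2 ?_))
    rwa [toReal_ofReal, add_sub_cancel_left]
  have h₁ := abs_le.1 (hshift (R ^ α⁻¹) (abs_of_nonneg hr).le)
  have h₂ := abs_le.1 (hshift (-R ^ α⁻¹) (by rw [abs_neg, abs_of_nonneg hr]))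
  exact (le_antisymm (by linarith) (by linarith) : c.toReal = x.toReal)

theorem exists_isIntervalChart_of_isometryEquiv {Y : Type v} [MetricSpace Y] {y : Y} {R : ℝ}
    (hR : 0 ≤ R) (E : closedBall (ofReal α 0) R ≃ᵢ closedBall y R) :
    ∃ ψ : Y → ℝ, IsIntervalChart α⁻¹ y R ψ := by
  classical
  have hy : y ∈ closedBall y R := mem_closedBall_self hR
  have hE : (E.symm ⟨y, hy⟩ : Snowflake α) = ofReal α 0 := by
    refine eq_of_closedBall_subset hR fun t ht => ?_
    rw [mem_closedBall, ← Subtype.dist_eq ⟨t, ht⟩, ← E.dist_eq, E.apply_symm_apply,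
      Subtype.dist_eq]
    exact (E ⟨t, ht⟩).2
  refine ⟨fun w => if hw : w ∈ closedBall y R then (E.symm ⟨w, hw⟩ : Snowflake α).toReal
    else 0, ⟨?_, fun a ha b hb => ?_, fun t ht => ?_⟩⟩
  · simp only [dif_pos hy, hE, toReal_ofReal]
  · simp only [dif_pos ha, dif_pos hb]
    rw [abs_sub_eq, ← Subtype.dist_eq, E.symm.dist_eq, Subtype.dist_eq]
  · have ht' : ofReal α t ∈ closedBall (ofReal α 0) R := by
      rwa [mem_closedBall, dist_le_iff hR, toReal_ofReal, toReal_ofReal, sub_zero, abs_le]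
    refine ⟨E ⟨ofReal α t, ht'⟩, (E _).2, ?_⟩
    simp only [dif_pos (E _).2, Subtype.coe_eta, E.symm_apply_apply, toReal_ofReal]

theorem pointedIsometric_of_forall_isIntervalChart {Y : Type v} [MetricSpace Y] {y : Y}
    {Φ : Y → ℝ} (hΦ : ∀ R ≥ 1, IsIntervalChart α⁻¹ y R Φ) :
    PointedIsometric y (ofReal α 0) := by
  refine ⟨fun w => ofReal α (Φ w), Isometry.of_dist_eq fun a b => ?_, fun t => ?_, ?_⟩
  · have ha : a ∈ closedBall y (max 1 (max (dist a y) (dist b y))) :=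
      mem_closedBall.2 (le_max_of_le_right (le_max_left _ _))
    have hb : b ∈ closedBall y (max 1 (max (dist a y) (dist b y))) :=
      mem_closedBall.2 (le_max_of_le_right (le_max_right _ _))
    rw [dist_eq, toReal_ofReal, toReal_ofReal, (hΦ _ (le_max_left _ _)).abs_sub a ha b hb,
      Real.rpow_inv_rpow dist_nonneg (Fact.out : 0 < α).ne']
  · set R := max 1 (|t.toReal| ^ α)
    have ht : t.toReal ∈ Set.Icc (-R ^ α⁻¹) (R ^ α⁻¹) :=
      abs_le.1 ((Real.le_rpow_inv_iff_of_pos (abs_nonneg _) (zero_le_one.trans (le_max_left _ _))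
        Fact.out).2 (le_max_right _ _))
    obtain ⟨b, -, hb⟩ := (hΦ R (le_max_left _ _)).Icc_subset ht
    exact ⟨b, show ofReal α (Φ b) = t by rw [hb]; rfl⟩
  · show ofReal α (Φ y) = ofReal α 0
    rw [(hΦ 1 le_rfl).map_center]

end Snowflake

/-- Fix `α ∈ (0, 1)` and equip `ℝ` with the snowflake distance
`d_α(x, y) = |x − y| ^ α`. For every `p ∈ ℝ`, the pointed space `((ℝ, d_α), 0)` is a tangent
of `(ℝ, d_α)` at `p`, and every proper tangent `(Y, y)` of `(ℝ, d_α)` at `p` is pointed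
isometric to `((ℝ, d_α), 0)`: the snowflaked line has a unique tangent at every point, equal
to itself. -/
theorem tangent_of_snowflake (α : ℝ) (h0 : 0 < α) (h1 : α < 1) :
    letI : MetricSpace (Snowflake α) := snowflakeMetricSpace α h0 h1
    ∀ p : Snowflake α,
      IsTangentAt p (Snowflake α) (Snowflake.ofReal α 0) ∧
        ∀ (Y : Type v) [MetricSpace Y] [ProperSpace Y] (y : Y),
          IsTangentAt p Y y → PointedIsometric y (Snowflake.ofReal α 0) := by
  have : Fact (0 < α) := ⟨h0⟩
  have : Fact (α < 1) := ⟨h1⟩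
  intro p
  refine ⟨Snowflake.isDilationHomogeneous.isTangentAt p _, fun Y _ _ y hT => ?_⟩
  obtain ⟨Φ, hΦ⟩ := exists_forall_isIntervalChart fun R hR =>
    Snowflake.exists_isIntervalChart_of_isometryEquiv hR.le
      (Snowflake.isDilationHomogeneous.nonempty_isometryEquiv_closedBall hT _ hR).some
  exact Snowflake.pointedIsometric_of_forall_isIntervalChart hΦ
end
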